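/- arXiv:1307.7017 — 2 statements merged into one kernel-verified Lean document; each statement's English description precedes it below -/
import Mathlib

section
/- Let ω(x) = 2 sin(πx/2). For all x, y ∈ [0,1] with y ≤ x and x + y ≥ 1, one has ω(x) + ω(y) − ω(2−x−y) ≥ y/4. -/
noncomputable section

open Real

/-- `ω(x) = 2 sin (π x / 2)`. -/
def omegaFn (x : ℝ) : ℝ := 2 * Real.sin (π * x / 2)

/-!
With `a = πx/2` and `b = πy/2`, the symmetry `ω(2 - α) = ω(α)` turns the left-hand side into
`2 (sin a + sin b - sin (a + b)) = 2 (sin a (1 - cos b) + sin b (1 - cos a))`.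
The first summand is nonnegative, Jordan's inequality gives `sin b ≥ y`, and `x ≥ 1/2` gives
`a ≥ π/4`, so `1 - cos a ≥ 1 - √2/2 > 1/8`.
-/

lemma sin_add_sin_sub_sin_add (a b : ℝ) :
    sin a + sin b - sin (a + b) = sin a * (1 - cos b) + sin b * (1 - cos a) := by
  rw [sin_add]
  ring

lemma omegaFn_two_sub (α : ℝ) : omegaFn (2 - α) = omegaFn α := by
  rw [omegaFn, omegaFn, show π * (2 - α) / 2 = π - π * α / 2 by ring, sin_pi_sub]

lemma omegaFn_add_omegaFn_sub_omegaFn_two_sub (x y : ℝ) :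
    omegaFn x + omegaFn y - omegaFn (2 - x - y) =
      2 * (sin (π * x / 2) * (1 - cos (π * y / 2)) + sin (π * y / 2) * (1 - cos (π * x / 2))) := by
  rw [sub_sub, omegaFn_two_sub, omegaFn, omegaFn, omegaFn,
    show π * (x + y) / 2 = π * x / 2 + π * y / 2 by ring, ← sin_add_sin_sub_sin_add]
  ring

lemma le_sin_pi_mul_div_two {y : ℝ} (hy0 : 0 ≤ y) (hy1 : y ≤ 1) : y ≤ sin (π * y / 2) := by
  have h := mul_le_sin (x := π * y / 2) (by positivity) (by nlinarith [pi_pos])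
  rwa [show 2 / π * (π * y / 2) = y by field_simp] at h

lemma cos_pi_mul_div_two_le_sqrt_two_div_two {x : ℝ} (hx : 1 / 2 ≤ x) (hx2 : x ≤ 2) :
    cos (π * x / 2) ≤ √2 / 2 := by
  rw [← cos_pi_div_four]
  exact cos_le_cos_of_nonneg_of_le_pi (by positivity) (by nlinarith [pi_pos]) (by nlinarith [pi_pos])

/-- for `x, y ∈ [0,1]` with `y ≤ x` and `x + y ≥ 1`,
`ω(x) + ω(y) − ω(2−x−y) ≥ y/4`. -/
theorem stmt16 (x y : ℝ) (hx : x ∈ Set.Icc (0 : ℝ) 1) (hy : y ∈ Set.Icc (0 : ℝ) 1)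
    (hyx : y ≤ x) (hxy : 1 ≤ x + y) :
    omegaFn x + omegaFn y - omegaFn (2 - x - y) ≥ y / 4 := by
  obtain ⟨hx0, hx1⟩ := hx
  obtain ⟨hy0, hy1⟩ := hy
  have hsin_x : 0 ≤ sin (π * x / 2) :=
    sin_nonneg_of_nonneg_of_le_pi (by positivity) (by nlinarith [pi_pos])
  have hsin_y : y ≤ sin (π * y / 2) := le_sin_pi_mul_div_two hy0 hy1
  have hcos_x : cos (π * x / 2) ≤ √2 / 2 :=
    cos_pi_mul_div_two_le_sqrt_two_div_two (by linarith) (by linarith)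
  have hcos_y : cos (π * y / 2) ≤ 1 := cos_le_one _
  rw [omegaFn_add_omegaFn_sub_omegaFn_two_sub, ge_iff_le]
  calc y / 4 ≤ 2 * (y * (1 - √2 / 2)) := by nlinarith [sqrt_two_lt_three_halves]
    _ ≤ 2 * (sin (π * y / 2) * (1 - cos (π * x / 2))) := by
      gcongr
      · nlinarith [sqrt_two_lt_three_halves]
      · linarith
    _ ≤ _ := by
      gcongr
      exact le_add_of_nonneg_left (mul_nonneg hsin_x (by linarith))

end
end

section
/- Let ω(x) = 2 sin(πx/2), let g ∈ C²([0,1],ℝ) with g'(0) = 0, set c₂ = sup_{x∈[0,1]} |g''(x)|, and define f(x) = ω(x)(g(x) − g(0)). Then there exists an absolute constant C > 0 (independent of g) such that for all x, y ∈ [0,1] with y ≤ x and x + y ≤ 1, one has |f(x) − f(x+y)| ≤ C c₂ x² y and |f(y)| ≤ C c₂ y³. -/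
/-!
Since `g'(0) = 0`, the mean value theorem applied twice gives `|g'(t)| ≤ c₂ t` and hence
`|g(b) - g(a)| ≤ c₂ b (b - a)` for `0 ≤ a ≤ b ≤ 1`; in particular `g - g(0)` vanishes to
second order at `0`. As `ω` is `π`-Lipschitz with `ω(0) = 0`, it vanishes to first order,
which gives `|f(y)| ≤ π c₂ y³`. For the increment, write
`f(x) - f(x+y) = (ω(x) - ω(x+y)) (g(x) - g(0)) + ω(x+y) (g(x) - g(x+y))`: the two terms are
at most `π y · c₂ x²` and `π (x+y) · c₂ (x+y) y`, and `x + y ≤ 2x`, so `C = 5π` works.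
-/

noncomputable section

open Real

/-- `z(x,y) = x+y` if `x+y ≤ 1`, else `2-x-y`. -/
def zfun (x y : ℝ) : ℝ := if x + y ≤ 1 then x + y else 2 - x - y

/-- `h₁(ν)` as a supremum in `ℝ≥0∞`. -/
def h1 (ν : ℝ → ℝ) : ENNReal :=
  sSup {r : ENNReal | ∃ τ₁ τ₂ τ₃ x y : ℝ,
    (τ₁ = 1 ∨ τ₁ = -1) ∧ (τ₂ = 1 ∨ τ₂ = -1) ∧ (τ₃ = 1 ∨ τ₃ = -1) ∧
    x ∈ Set.Icc (0 : ℝ) 1 ∧ y ∈ Set.Icc (0 : ℝ) 1 ∧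
    τ₁ * omegaFn x + τ₂ * omegaFn y + τ₃ * omegaFn (zfun x y) ≠ 0 ∧
    r = ENNReal.ofReal (|τ₁ * ν x + τ₂ * ν y + τ₃ * ν (zfun x y)| /
      |τ₁ * omegaFn x + τ₂ * omegaFn y + τ₃ * omegaFn (zfun x y)|)}

/-- Second derivative within `[0,1]`. -/
def secondDerivOn (g : ℝ → ℝ) : ℝ → ℝ :=
  derivWithin (derivWithin g (Set.Icc 0 1)) (Set.Icc (0 : ℝ) 1)

/-- `c₂ = sup_{x ∈ [0,1]} |g''(x)|`. -/
def c2sup (g : ℝ → ℝ) : ℝ := ⨆ x : Set.Icc (0 : ℝ) 1, |secondDerivOn g x.1|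

open Set

lemma abs_omegaFn_sub_le (a b : ℝ) : |omegaFn a - omegaFn b| ≤ π * |a - b| := by
  have hsin := Real.abs_sin_sub_sin_le (π * a / 2) (π * b / 2)
  rw [show π * a / 2 - π * b / 2 = π / 2 * (a - b) by ring, abs_mul,
    abs_of_pos (by positivity : 0 < π / 2)] at hsin
  rw [omegaFn, omegaFn, ← mul_sub, abs_mul, abs_two]
  linarith

lemma abs_omegaFn_le (x : ℝ) : |omegaFn x| ≤ π * |x| := by
  simpa [omegaFn] using abs_omegaFn_sub_le x 0

lemma c2sup_nonneg (g : ℝ → ℝ) : 0 ≤ c2sup g :=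
  Real.iSup_nonneg fun _ => abs_nonneg _

section SecondOrder

variable {g : ℝ → ℝ} (hg : ContDiffOn ℝ 2 g (Icc 0 1))
include hg

lemma abs_secondDerivOn_le_c2sup {t : ℝ} (ht : t ∈ Icc (0 : ℝ) 1) :
    |secondDerivOn g t| ≤ c2sup g := by
  have hcont : ContinuousOn (secondDerivOn g) (Icc 0 1) :=
    (hg.derivWithin (uniqueDiffOn_Icc one_pos) (m := 1) (by norm_num)).continuousOn_derivWithin
      (uniqueDiffOn_Icc one_pos) le_rfl
  have hbdd : BddAbove (range fun t : Icc (0 : ℝ) 1 => |secondDerivOn g t|) := by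
    rw [← image_eq_range (fun u => |secondDerivOn g u|)]
    exact (isCompact_Icc.image_of_continuousOn hcont.abs).bddAbove
  exact le_ciSup hbdd ⟨t, ht⟩

lemma abs_derivWithin_le_c2sup_mul (hg0 : derivWithin g (Icc 0 1) 0 = 0) {t : ℝ}
    (ht : t ∈ Icc (0 : ℝ) 1) : |derivWithin g (Icc 0 1) t| ≤ c2sup g * t := by
  have hg' : DifferentiableOn ℝ (derivWithin g (Icc 0 1)) (Icc 0 1) :=
    (hg.derivWithin (uniqueDiffOn_Icc one_pos) (m := 1) (by norm_num)).differentiableOn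
      (by norm_num)
  have := (convex_Icc (0 : ℝ) 1).norm_image_sub_le_of_norm_derivWithin_le hg'
    (fun s hs => abs_secondDerivOn_le_c2sup hg hs) (left_mem_Icc.2 zero_le_one) ht
  simpa [hg0, abs_of_nonneg ht.1] using this

lemma abs_sub_le_c2sup_mul (hg0 : derivWithin g (Icc 0 1) 0 = 0) {a b : ℝ} (ha : 0 ≤ a)
    (hab : a ≤ b) (hb : b ≤ 1) : |g b - g a| ≤ c2sup g * b * (b - a) := by
  have hsub : Icc a b ⊆ Icc 0 1 := Icc_subset_Icc ha hb
  have hderiv : ∀ t ∈ Icc a b, HasDerivWithinAt g (derivWithin g (Icc 0 1) t) (Icc a b) t :=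
    fun t ht => ((hg.differentiableOn (by norm_num) t (hsub ht)).hasDerivWithinAt).mono hsub
  have hbound : ∀ t ∈ Icc a b, ‖derivWithin g (Icc 0 1) t‖ ≤ c2sup g * b := fun t ht =>
    (abs_derivWithin_le_c2sup_mul hg hg0 (hsub ht)).trans
      (mul_le_mul_of_nonneg_left ht.2 (c2sup_nonneg g))
  have := (convex_Icc a b).norm_image_sub_le_of_norm_hasDerivWithin_le hderiv hbound
    (left_mem_Icc.2 hab) (right_mem_Icc.2 hab)
  simpa [abs_of_nonneg (sub_nonneg.2 hab)] using this

lemma abs_omegaFn_mul_sub_le (hg0 : derivWithin g (Icc 0 1) 0 = 0) {y : ℝ}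
    (hy : y ∈ Icc (0 : ℝ) 1) : |omegaFn y * (g y - g 0)| ≤ π * c2sup g * y ^ 3 := by
  have hω : |omegaFn y| ≤ π * y := by simpa [abs_of_nonneg hy.1] using abs_omegaFn_le y
  have hg_y : |g y - g 0| ≤ c2sup g * y * y := by
    simpa using abs_sub_le_c2sup_mul hg hg0 le_rfl hy.1 hy.2
  calc |omegaFn y * (g y - g 0)| = |omegaFn y| * |g y - g 0| := abs_mul _ _
    _ ≤ π * y * (c2sup g * y * y) :=
        mul_le_mul hω hg_y (abs_nonneg _) (mul_nonneg pi_pos.le hy.1)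
    _ = π * c2sup g * y ^ 3 := by ring

lemma abs_omegaFn_mul_sub_sub_le (hg0 : derivWithin g (Icc 0 1) 0 = 0) {x y : ℝ}
    (hy : 0 ≤ y) (hyx : y ≤ x) (hxy : x + y ≤ 1) :
    |omegaFn x * (g x - g 0) - omegaFn (x + y) * (g (x + y) - g 0)| ≤
      5 * π * c2sup g * x ^ 2 * y := by
  have hx : 0 ≤ x := hy.trans hyx
  have hω_sub : |omegaFn x - omegaFn (x + y)| ≤ π * y := by
    simpa [abs_of_nonneg hy] using abs_omegaFn_sub_le x (x + y)
  have hω : |omegaFn (x + y)| ≤ π * (x + y) := by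
    simpa [abs_of_nonneg (add_nonneg hx hy)] using abs_omegaFn_le (x + y)
  have hg_x : |g x - g 0| ≤ c2sup g * x * x := by
    simpa using abs_sub_le_c2sup_mul hg hg0 le_rfl hx (by linarith)
  have hg_xy : |g x - g (x + y)| ≤ c2sup g * (x + y) * y := by
    simpa [abs_sub_comm] using abs_sub_le_c2sup_mul hg hg0 hx (le_add_of_nonneg_right hy) hxy
  have hc := c2sup_nonneg g
  calc |omegaFn x * (g x - g 0) - omegaFn (x + y) * (g (x + y) - g 0)|
      = |(omegaFn x - omegaFn (x + y)) * (g x - g 0) + omegaFn (x + y) * (g x - g (x + y))| := by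
        ring_nf
    _ ≤ |omegaFn x - omegaFn (x + y)| * |g x - g 0| + |omegaFn (x + y)| * |g x - g (x + y)| := by
        rw [← abs_mul, ← abs_mul]; exact abs_add_le _ _
    _ ≤ π * y * (c2sup g * x * x) + π * (x + y) * (c2sup g * (x + y) * y) := by gcongr
    _ = π * c2sup g * y * (x ^ 2 + (x + y) ^ 2) := by ring
    _ ≤ π * c2sup g * y * (x ^ 2 + (2 * x) ^ 2) := by gcongr; linarith
    _ = 5 * π * c2sup g * x ^ 2 * y := by ring

end SecondOrder

/-- with `f(x) = ω(x)(g(x) − g(0))`, there is an absolute constant `C > 0`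
such that `|f(x) − f(x+y)| ≤ C c₂ x² y` and `|f(y)| ≤ C c₂ y³` for `y ≤ x`, `x + y ≤ 1`. -/
theorem stmt18 :
    ∃ C : ℝ, 0 < C ∧
      ∀ g : ℝ → ℝ,
        ContDiffOn ℝ 2 g (Set.Icc 0 1) →
        derivWithin g (Set.Icc 0 1) 0 = 0 →
        ∀ x ∈ Set.Icc (0 : ℝ) 1, ∀ y ∈ Set.Icc (0 : ℝ) 1, y ≤ x → x + y ≤ 1 →
          |(omegaFn x * (g x - g 0)) - (omegaFn (x + y) * (g (x + y) - g 0))| ≤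
              C * c2sup g * x ^ 2 * y ∧
            |omegaFn y * (g y - g 0)| ≤ C * c2sup g * y ^ 3 := by
  refine ⟨5 * π, by positivity, fun g hg hg0 x hx y hy hyx hxy => ⟨?_, ?_⟩⟩
  · exact abs_omegaFn_mul_sub_sub_le hg hg0 hy.1 hyx hxy
  · have hc : 0 ≤ π * c2sup g * y ^ 3 :=
      mul_nonneg (mul_nonneg pi_pos.le (c2sup_nonneg g)) (pow_nonneg hy.1 3)
    linarith [abs_omegaFn_mul_sub_le hg hg0 hy]
end
end
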